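/- arXiv:2602.18656 — 3 statements merged into one kernel-verified Lean document; each statement's English description precedes it below -/
import Mathlib

section
/- Let α ∈ [0,1], let φ be a size-α test based on T and let ψ be a minimally discrete size-α test based on R, where R is injective and agrees with T, and assume p₀(x) > 0 for every x ∈ 𝒳. Then Pr₀{φ(X) = 1} ≤ Pr₀{ψ(X) = 1} ≤ α; in particular the non-randomized MD decision rule has level α under the null. -/
/-!
If `φ x = 1`, every `y` with `T y ≥ T x` is also rejected by `φ`. Were `ψ x < 1`, then `R x ≥ k*`,
so `ψ` vanishes on all `y` with `R y > R x`, while the others satisfy `T y ≥ T x` and hence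
`φ y = 1`. Thus `ψ ≤ φ` pointwise with strict inequality at `x`; as `p₀ > 0` this contradicts
`E₀ φ = α = E₀ ψ`. So `{φ = 1} ⊆ {ψ = 1}`, and `Pr₀{ψ = 1} ≤ E₀ ψ = α` since `ψ ≤ 1`.
-/

open Set

section

variable {𝒳 : Type*}

theorem ite_eq_one_le_mul {a b : ℝ} (ha : a ∈ Icc (0 : ℝ) 1) (hb : 0 ≤ b) :
    (if a = 1 then b else 0) ≤ a * b := by
  split_ifs with h
  · rw [h, one_mul]
  · exact mul_nonneg ha.1 hb

theorem summable_mul_of_mem_Icc {f p : 𝒳 → ℝ} (hp : Summable p) (hp0 : ∀ x, 0 ≤ p x)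
    (hf : ∀ x, f x ∈ Icc (0 : ℝ) 1) : Summable fun x => f x * p x :=
  hp.of_nonneg_of_le (fun x => mul_nonneg (hf x).1 (hp0 x))
    (fun x => mul_le_of_le_one_left (hp0 x) (hf x).2)

theorem eq_of_le_of_tsum_mul_eq {f g p : 𝒳 → ℝ} (hp : ∀ x, 0 < p x)
    (hf : Summable fun x => f x * p x) (hg : Summable fun x => g x * p x)
    (hle : ∀ x, f x ≤ g x) (heq : ∑' x, f x * p x = ∑' x, g x * p x) (x : 𝒳) : f x = g x := by
  by_contra hne
  exact heq.not_lt <| Summable.tsum_lt_tsum (fun y => mul_le_mul_of_nonneg_right (hle y) (hp y).le)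
    (mul_lt_mul_of_pos_right ((hle x).lt_of_ne hne) (hp x)) hf hg

variable {T φ : 𝒳 → ℝ} {k γ : ℝ}

theorem eq_one_of_le_of_eq_one (hφ1 : ∀ x, T x > k → φ x = 1) (hφ2 : ∀ x, T x = k → φ x = γ)
    (hφ3 : ∀ x, T x < k → φ x = 0) {x y : 𝒳} (hx : φ x = 1) (hxy : T x ≤ T y) : φ y = 1 := by
  have hkx : k ≤ T x := not_lt.1 fun h => by simp [hφ3 x h] at hx
  rcases (hkx.trans hxy).lt_or_eq with hy | hy
  · exact hφ1 y hy
  · rw [hφ2 y hy.symm, ← hφ2 x (le_antisymm (hxy.trans hy.symm.le) hkx), hx]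

variable {R : 𝒳 → ℕ} {ψ : 𝒳 → ℝ} {kstar : ℕ}

theorem le_of_eq_one_of_le_rank (hagree : ∀ x y, T x > T y → R x < R y)
    (hφ1 : ∀ x, T x > k → φ x = 1) (hφ2 : ∀ x, T x = k → φ x = γ)
    (hφ3 : ∀ x, T x < k → φ x = 0) (hφ0 : ∀ y, 0 ≤ φ y) (hψ1 : ∀ y, ψ y ≤ 1)
    (hψ3 : ∀ x, R x > kstar → ψ x = 0) {x : 𝒳} (hx : φ x = 1) (hRx : kstar ≤ R x) (y : 𝒳) :
    ψ y ≤ φ y := by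
  rcases le_or_gt (R y) (R x) with h | h
  · have hxy : T x ≤ T y := not_lt.1 fun hT => (hagree x y hT).not_ge h
    rw [eq_one_of_le_of_eq_one hφ1 hφ2 hφ3 hx hxy]
    exact hψ1 y
  · rw [hψ3 y (hRx.trans_lt h)]
    exact hφ0 y

theorem eq_one_of_eq_one_of_tsum_mul_eq {p : 𝒳 → ℝ} (hp : ∀ x, 0 < p x) (hpsum : Summable p)
    (hagree : ∀ x y, T x > T y → R x < R y) (hφ01 : ∀ x, φ x ∈ Icc (0 : ℝ) 1)
    (hφ1 : ∀ x, T x > k → φ x = 1) (hφ2 : ∀ x, T x = k → φ x = γ)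
    (hφ3 : ∀ x, T x < k → φ x = 0) (hψ01 : ∀ x, ψ x ∈ Icc (0 : ℝ) 1)
    (hψ1 : ∀ x, R x < kstar → ψ x = 1) (hψ3 : ∀ x, R x > kstar → ψ x = 0)
    (heq : ∑' x, ψ x * p x = ∑' x, φ x * p x) {x : 𝒳} (hx : φ x = 1) : ψ x = 1 := by
  by_contra hne
  have hRx : kstar ≤ R x := not_lt.1 fun h => hne (hψ1 x h)
  have hle := le_of_eq_one_of_le_rank hagree hφ1 hφ2 hφ3 (fun y => (hφ01 y).1)
    (fun y => (hψ01 y).2) hψ3 hx hRx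
  exact hne <| (eq_of_le_of_tsum_mul_eq hp (summable_mul_of_mem_Icc hpsum (hp · |>.le) hψ01)
    (summable_mul_of_mem_Icc hpsum (hp · |>.le) hφ01) hle heq x).trans hx

end

theorem stmt_5_general {𝒳 : Type*}
    (p₀ : 𝒳 → ℝ) (hp₀pos : ∀ x, 0 < p₀ x) (hp₀sum : ∑' x, p₀ x = 1)
    (T : 𝒳 → ℝ) (R : 𝒳 → ℕ)
    (hagree : ∀ x y, T x > T y → R x < R y)
    (α : ℝ)
    (φ : 𝒳 → ℝ) (hφ01 : ∀ x, φ x ∈ Set.Icc (0:ℝ) 1)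
    (k : ℝ) (γ : ℝ)
    (hφ1 : ∀ x, T x > k → φ x = 1) (hφ2 : ∀ x, T x = k → φ x = γ)
    (hφ3 : ∀ x, T x < k → φ x = 0) (hφα : ∑' x, φ x * p₀ x = α)
    (ψ : 𝒳 → ℝ) (hψ01 : ∀ x, ψ x ∈ Set.Icc (0:ℝ) 1)
    (kstar : ℕ)
    (hψ1 : ∀ x, R x < kstar → ψ x = 1)
    (hψ3 : ∀ x, R x > kstar → ψ x = 0) (hψα : ∑' x, ψ x * p₀ x = α) :
    (∑' x, if φ x = 1 then p₀ x else 0) ≤ (∑' x, if ψ x = 1 then p₀ x else 0)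
      ∧ (∑' x, if ψ x = 1 then p₀ x else 0) ≤ α := by
  have hp₀ : Summable p₀ := by
    by_contra h
    simp [tsum_eq_zero_of_not_summable h] at hp₀sum
  have hrej {f : 𝒳 → ℝ} (hf : ∀ x, f x ∈ Icc (0 : ℝ) 1) :
      Summable fun x => if f x = 1 then p₀ x else 0 :=
    (summable_mul_of_mem_Icc hp₀ (hp₀pos · |>.le) hf).of_nonneg_of_le
      (fun x => ite_nonneg (hp₀pos x).le le_rfl)
      (fun x => ite_eq_one_le_mul (hf x) (hp₀pos x).le)
  have hsub : ∀ x, φ x = 1 → ψ x = 1 := fun x =>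
    eq_one_of_eq_one_of_tsum_mul_eq hp₀pos hp₀ hagree hφ01 hφ1 hφ2 hφ3 hψ01 hψ1 hψ3
      (hψα.trans hφα.symm)
  constructor
  · refine Summable.tsum_le_tsum (fun x => ?_) (hrej hφ01) (hrej hψ01)
    by_cases h : φ x = 1
    · simp [h, hsub x h]
    · rw [if_neg h]
      exact ite_nonneg (hp₀pos x).le le_rfl
  · rw [← hψα]
    exact Summable.tsum_le_tsum (fun x => ite_eq_one_le_mul (hψ01 x) (hp₀pos x).le)
      (hrej hψ01) (summable_mul_of_mem_Icc hp₀ (hp₀pos · |>.le) hψ01)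

/-- If `φ` is a size-α test based on `T` and `ψ` is a minimally
discrete size-α test based on `R` (injective, agreeing with `T`), with
`p₀(x) > 0` for all `x`, then `Pr₀{φ(X) = 1} ≤ Pr₀{ψ(X) = 1} ≤ α`; in
particular the non-randomized MD decision rule has level α under the null. -/
theorem stmt_5 {𝒳 : Type*} [Countable 𝒳]
    (p₀ : 𝒳 → ℝ) (hp₀pos : ∀ x, 0 < p₀ x) (hp₀sum : ∑' x, p₀ x = 1)
    (T : 𝒳 → ℝ) (R : 𝒳 → ℕ) (hRinj : Function.Injective R)
    (hagree : ∀ x y, T x > T y → R x < R y)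
    (α : ℝ) (hα : α ∈ Set.Icc (0:ℝ) 1)
    (φ : 𝒳 → ℝ) (hφ01 : ∀ x, φ x ∈ Set.Icc (0:ℝ) 1)
    (k : ℝ) (γ : ℝ) (hγ : γ ∈ Set.Icc (0:ℝ) 1)
    (hφ1 : ∀ x, T x > k → φ x = 1) (hφ2 : ∀ x, T x = k → φ x = γ)
    (hφ3 : ∀ x, T x < k → φ x = 0) (hφα : ∑' x, φ x * p₀ x = α)
    (ψ : 𝒳 → ℝ) (hψ01 : ∀ x, ψ x ∈ Set.Icc (0:ℝ) 1)
    (kstar : ℕ) (γstar : ℝ) (hγstar : γstar ∈ Set.Icc (0:ℝ) 1)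
    (hψ1 : ∀ x, R x < kstar → ψ x = 1) (hψ2 : ∀ x, R x = kstar → ψ x = γstar)
    (hψ3 : ∀ x, R x > kstar → ψ x = 0) (hψα : ∑' x, ψ x * p₀ x = α) :
    (∑' x, if φ x = 1 then p₀ x else 0) ≤ (∑' x, if ψ x = 1 then p₀ x else 0)
      ∧ (∑' x, if ψ x = 1 then p₀ x else 0) ≤ α :=
  stmt_5_general p₀ hp₀pos hp₀sum T R hagree α φ hφ01 k γ hφ1 hφ2 hφ3 hφα ψ hψ01 kstar hψ1 hψ3 hψα
end

section
/- If R is injective and agrees with T, then for every t ∈ [0,1], Pr₀{P^T(X) ≤ t} ≤ Pr₀{P^{MD}(X) ≤ t} ≤ t; that is, under the null distribution the MD natural p-value is stochastically greater than or equal to a uniform random variable (hence valid) while being stochastically less than or equal to the natural p-value based on T. -/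
/-!
Agreement of `R` with `T` makes `{y | R y ≤ R x}` a subset of `{y | T y ≥ T x}`, so
`P^{MD} ≤ P^T` pointwise, and the first inequality is monotonicity of `Pr₀`. For validity,
any finite set of points with `P^{MD} ≤ t` lies inside `{y | R y ≤ R b}` for the point `b`
of largest rank among them, so its null mass is at most `P^{MD}(b) ≤ t`.
-/

section NullMass

variable {𝒳 : Type*} {p : 𝒳 → ℝ}

theorem summable_ite_of_nonneg (hp : ∀ x, 0 ≤ p x) (hsum : Summable p)
    (P : 𝒳 → Prop) [DecidablePred P] : Summable fun x => if P x then p x else 0 :=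
  hsum.of_nonneg_of_le (fun x => by split_ifs <;> simp [hp]) fun x => by split_ifs <;> simp [hp]

theorem tsum_ite_mono (hp : ∀ x, 0 ≤ p x) (hsum : Summable p)
    {P Q : 𝒳 → Prop} [DecidablePred P] [DecidablePred Q] (hPQ : ∀ x, P x → Q x) :
    (∑' x, if P x then p x else 0) ≤ ∑' x, if Q x then p x else 0 := by
  refine (summable_ite_of_nonneg hp hsum P).tsum_le_tsum (fun x => ?_)
    (summable_ite_of_nonneg hp hsum Q)
  by_cases hx : P x
  · simp [hx, hPQ x hx]
  · split_ifs <;> simp [hp]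

theorem tsum_ite_lowerTail_le {β : Type*} [LinearOrder β] (hp : ∀ x, 0 ≤ p x)
    (hsum : Summable p) (f : 𝒳 → β) (PV : 𝒳 → ℝ)
    (hPV : ∀ x, PV x = ∑' y, if f y ≤ f x then p y else 0) {t : ℝ} (ht : 0 ≤ t) :
    (∑' x, if PV x ≤ t then p x else 0) ≤ t := by
  classical
  refine Real.tsum_le_of_sum_le (fun x => by split_ifs <;> simp [hp]) fun s => ?_
  rw [Finset.sum_ite, Finset.sum_const_zero, add_zero]
  set s' := s.filter fun x => PV x ≤ t
  rcases s'.eq_empty_or_nonempty with hempty | hne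
  · simpa [hempty] using ht
  obtain ⟨b, hb, hb_max⟩ := s'.exists_max_image f hne
  calc ∑ x ∈ s', p x = ∑ x ∈ s', if f x ≤ f b then p x else 0 :=
        Finset.sum_congr rfl fun x hx => by simp [hb_max x hx]
    _ ≤ ∑' x, if f x ≤ f b then p x else 0 :=
        (summable_ite_of_nonneg hp hsum _).sum_le_tsum s' fun x _ => by split_ifs <;> simp [hp]
    _ = PV b := (hPV b).symm
    _ ≤ t := (Finset.mem_filter.mp hb).2

end NullMass

theorem stmt_8_general {𝒳 : Type*}
    (p₀ : 𝒳 → ℝ) (hp₀ : ∀ x, 0 ≤ p₀ x) (hp₀sum : ∑' x, p₀ x = 1)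
    (T : 𝒳 → ℝ) (R : 𝒳 → ℕ)
    (hagree : ∀ x y, T x > T y → R x < R y)
    (PT PMD : 𝒳 → ℝ)
    (hPT : ∀ x, PT x = ∑' y, if T y ≥ T x then p₀ y else 0)
    (hPMD : ∀ x, PMD x = ∑' y, if R y ≤ R x then p₀ y else 0) :
    ∀ t ∈ Set.Icc (0:ℝ) 1,
      (∑' x, if PT x ≤ t then p₀ x else 0) ≤ (∑' x, if PMD x ≤ t then p₀ x else 0)
        ∧ (∑' x, if PMD x ≤ t then p₀ x else 0) ≤ t := by
  rintro t ⟨ht, -⟩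
  have hsum : Summable p₀ := by
    by_contra h
    simp [tsum_eq_zero_of_not_summable h] at hp₀sum
  have hPMD_le_PT : ∀ x, PMD x ≤ PT x := fun x => by
    rw [hPMD, hPT]
    exact tsum_ite_mono hp₀ hsum fun y hy => not_lt.mp fun hlt => (hagree x y hlt).not_ge hy
  exact ⟨tsum_ite_mono hp₀ hsum fun x hx => (hPMD_le_PT x).trans hx,
    tsum_ite_lowerTail_le hp₀ hsum R PMD hPMD ht⟩

/-- If `R` is injective and agrees with `T`, then under the null,
for every `t ∈ [0,1]`, `Pr₀{P^T(X) ≤ t} ≤ Pr₀{P^{MD}(X) ≤ t} ≤ t`: the MD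
natural p-value is valid (stochastically ≥ uniform) while stochastically less
than or equal to the natural p-value based on `T`. -/
theorem stmt_8 {𝒳 : Type*} [Countable 𝒳]
    (p₀ : 𝒳 → ℝ) (hp₀ : ∀ x, 0 ≤ p₀ x) (hp₀sum : ∑' x, p₀ x = 1)
    (T : 𝒳 → ℝ) (R : 𝒳 → ℕ) (hRinj : Function.Injective R)
    (hagree : ∀ x y, T x > T y → R x < R y)
    (PT PMD : 𝒳 → ℝ)
    (hPT : ∀ x, PT x = ∑' y, if T y ≥ T x then p₀ y else 0)
    (hPMD : ∀ x, PMD x = ∑' y, if R y ≤ R x then p₀ y else 0) :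
    ∀ t ∈ Set.Icc (0:ℝ) 1,
      (∑' x, if PT x ≤ t then p₀ x else 0) ≤ (∑' x, if PMD x ≤ t then p₀ x else 0)
        ∧ (∑' x, if PMD x ≤ t then p₀ x else 0) ≤ t :=
  stmt_8_general p₀ hp₀ hp₀sum T R hagree PT PMD hPT hPMD
end

section
/- Let α ∈ [0,1], let φ be a size-α test based on T and let ψ be a minimally discrete size-α test based on R, where R is injective and agrees with T, assume p₀(x) > 0 for every x ∈ 𝒳, and assume T is sufficient for the family. Then for every convex function h : [0,1] → ℝ, Σ_x h(φ(x))p₀(x) ≤ Σ_x h(ψ(x))p₀(x); that is, φ(X) is dominated by ψ(X) in the convex order under the null distribution. -/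
/-!
Comparing sizes forces the MD test `ψ` to equal `1` where `T > k` and `0` where `T < k`: if,
say, `ψ x < 1` at some `x` with `T x > k`, then `ψ` vanishes wherever `T ≤ k`, so `ψ ≤ φ`
everywhere, and equal sizes together with `p₀ > 0` give `ψ = φ`, contradicting `φ x = 1`.
Hence `φ` differs from `ψ` only on `{T = k}`, where it is the constant `γ`. For `0 < γ < 1`,
a supporting line `h γ + c (t - γ) ≤ h t` of `h` at `γ` yields
`h (φ x) ≤ h (ψ x) + c (φ x - ψ x)` pointwise, and the linear term sums to zero because
the sizes agree. For `γ ∈ {0, 1}` the tests are comparable pointwise, hence equal.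
-/

open Set

namespace ConvexOn

variable {S : Set ℝ} {f : ℝ → ℝ} {x y : ℝ}

lemma add_rightDeriv_mul_sub_le (hf : ConvexOn ℝ S f) (hx : x ∈ interior S) (hy : y ∈ S) :
    f x + derivWithin f (Ioi x) x * (y - x) ≤ f y := by
  rcases lt_trichotomy x y with hxy | rfl | hyx
  · have hslope := hf.rightDeriv_le_slope_of_mem_interior hx hy hxy
    rw [slope_def_field, le_div_iff₀ (sub_pos.2 hxy)] at hslope
    linarith
  · simp
  · have hslope := hf.slope_le_leftDeriv_of_mem_interior hy hx hyx
    rw [slope_def_field, div_le_iff₀ (sub_pos.2 hyx)] at hslope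
    have hderiv := mul_le_mul_of_nonneg_right (hf.leftDeriv_le_rightDeriv_of_mem_interior hx)
      (sub_pos.2 hyx).le
    linarith

lemma exists_forall_abs_le_of_Icc {a b : ℝ} (hf : ConvexOn ℝ (Icc a b) f) (hab : a < b) :
    ∃ C, ∀ t ∈ Icc a b, |f t| ≤ C := by
  obtain ⟨m, hm⟩ : (interior (Icc a b)).Nonempty := by
    rw [interior_Icc]; exact nonempty_Ioo.2 hab
  have hmI : m ∈ Icc a b := interior_subset hm
  set c := derivWithin f (Ioi m) m
  refine ⟨max (max (f a) (f b)) (|c| * (b - a) - f m), fun t ht => abs_le.2 ⟨?_, ?_⟩⟩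
  · have hline := hf.add_rightDeriv_mul_sub_le hm ht
    have hct : |c * (t - m)| ≤ |c| * (b - a) := by
      rw [abs_mul]
      exact mul_le_mul_of_nonneg_left
        (abs_le.2 ⟨by linarith [ht.1, hmI.2], by linarith [ht.2, hmI.1]⟩) (abs_nonneg c)
    linarith [neg_abs_le (c * (t - m)), le_max_right (max (f a) (f b)) (|c| * (b - a) - f m)]
  · exact (hf.le_max_of_mem_Icc (left_mem_Icc.2 hab.le) (right_mem_Icc.2 hab.le) ht).trans
      (le_max_left _ _)

end ConvexOn

section WeightedSums

variable {ι : Type*} {w : ι → ℝ}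

lemma Summable.mul_of_abs_le (hw : Summable w) (hw0 : ∀ i, 0 ≤ w i) {u : ι → ℝ} {C : ℝ}
    (hu : ∀ i, |u i| ≤ C) : Summable fun i => u i * w i :=
  hw.mul_left C |>.of_norm_bounded fun i => by
    rw [Real.norm_eq_abs, abs_mul, abs_of_nonneg (hw0 i)]
    exact mul_le_mul_of_nonneg_right (hu i) (hw0 i)

lemma Summable.mul_of_mem_Icc (hw : Summable w) (hw0 : ∀ i, 0 ≤ w i) {u : ι → ℝ}
    (hu : ∀ i, u i ∈ Icc (0 : ℝ) 1) : Summable fun i => u i * w i :=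
  hw.mul_of_abs_le hw0 fun i => abs_le.2 ⟨by linarith [(hu i).1], (hu i).2⟩

lemma eq_of_le_of_tsum_mul_eq_s14 (hw : ∀ i, 0 < w i) {f g : ι → ℝ}
    (hf : Summable fun i => f i * w i) (hg : Summable fun i => g i * w i) (hfg : ∀ i, f i ≤ g i)
    (hsum : ∑' i, f i * w i = ∑' i, g i * w i) : f = g := by
  funext i
  by_contra hne
  refine (Summable.tsum_lt_tsum (fun j => mul_le_mul_of_nonneg_right (hfg j) (hw j).le)
    (mul_lt_mul_of_pos_right (lt_of_le_of_ne (hfg i) hne) (hw i)) hf hg).ne hsum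

theorem tsum_convex_mul_le_of_eq_or_eq_const {h : ℝ → ℝ} (hh : ConvexOn ℝ (Icc 0 1) h)
    (hw : Summable w) (hw0 : ∀ i, 0 < w i) {f g : ι → ℝ} (hf : ∀ i, f i ∈ Icc (0 : ℝ) 1)
    (hg : ∀ i, g i ∈ Icc (0 : ℝ) 1) {γ : ℝ} (hγ : γ ∈ Icc (0 : ℝ) 1)
    (hfg : ∀ i, f i = g i ∨ f i = γ) (hsum : ∑' i, f i * w i = ∑' i, g i * w i) :
    ∑' i, h (f i) * w i ≤ ∑' i, h (g i) * w i := by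
  have hw0' : ∀ i, 0 ≤ w i := fun i => (hw0 i).le
  have hfs := hw.mul_of_mem_Icc hw0' hf
  have hgs := hw.mul_of_mem_Icc hw0' hg
  obtain ⟨C, hC⟩ := hh.exists_forall_abs_le_of_Icc zero_lt_one
  have hhfs := hw.mul_of_abs_le hw0' fun i => hC _ (hf i)
  have hhgs := hw.mul_of_abs_le hw0' fun i => hC _ (hg i)
  rcases hγ.1.eq_or_lt with rfl | hγ0
  · have hle : ∀ i, f i ≤ g i := fun i => (hfg i).elim le_of_eq fun hi => hi ▸ (hg i).1
    rw [eq_of_le_of_tsum_mul_eq_s14 hw0 hfs hgs hle hsum]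
  rcases hγ.2.eq_or_lt with rfl | hγ1
  · have hle : ∀ i, g i ≤ f i := fun i => (hfg i).elim ge_of_eq fun hi => hi ▸ (hg i).2
    rw [eq_of_le_of_tsum_mul_eq_s14 hw0 hgs hfs hle hsum.symm]
  have hγint : γ ∈ interior (Icc (0 : ℝ) 1) := by rw [interior_Icc]; exact ⟨hγ0, hγ1⟩
  set c := derivWithin h (Ioi γ) γ
  have hpoint : ∀ i, h (f i) * w i ≤ h (g i) * w i + c * (f i * w i) - c * (g i * w i) := by
    intro i
    rcases hfg i with hi | hi
    · rw [hi]; linarith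
    · have hline := mul_le_mul_of_nonneg_right (hh.add_rightDeriv_mul_sub_le hγint (hg i))
        (hw0' i)
      rw [hi]; linarith
  calc ∑' i, h (f i) * w i
      ≤ ∑' i, (h (g i) * w i + c * (f i * w i) - c * (g i * w i)) :=
        Summable.tsum_le_tsum hpoint hhfs ((hhgs.add (hfs.mul_left c)).sub (hgs.mul_left c))
    _ = ∑' i, h (g i) * w i := by
        rw [Summable.tsum_sub (hhgs.add (hfs.mul_left c)) (hgs.mul_left c),
          Summable.tsum_add hhgs (hfs.mul_left c), tsum_mul_left, tsum_mul_left, hsum]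
        ring

end WeightedSums

section Tests

variable {ι : Type*} {T : ι → ℝ} {R : ι → ℕ} {ψ : ι → ℝ} {kstar : ℕ}

lemma mdTest_eq_zero_of_lt_of_ne_one (hagree : ∀ x y, T x > T y → R x < R y)
    (hψ1 : ∀ x, R x < kstar → ψ x = 1) (hψ3 : ∀ x, R x > kstar → ψ x = 0) {x y : ι}
    (hyx : T y < T x) (hψx : ψ x ≠ 1) : ψ y = 0 :=
  hψ3 y <| (not_lt.1 fun h => hψx (hψ1 x h)).trans_lt (hagree x y hyx)

lemma mdTest_eq_one_of_lt_of_ne_zero (hagree : ∀ x y, T x > T y → R x < R y)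
    (hψ1 : ∀ x, R x < kstar → ψ x = 1) (hψ3 : ∀ x, R x > kstar → ψ x = 0) {x y : ι}
    (hxy : T x < T y) (hψx : ψ x ≠ 0) : ψ y = 1 :=
  hψ1 y <| (hagree y x hxy).trans_le (not_lt.1 fun h => hψx (hψ3 x h))

variable {w φ : ι → ℝ} {k : ℝ}

lemma mdTest_eq_one_of_gt (hw : ∀ i, 0 < w i) (hφs : Summable fun i => φ i * w i)
    (hψs : Summable fun i => ψ i * w i) (hsize : ∑' i, ψ i * w i = ∑' i, φ i * w i)
    (hφ0 : ∀ i, 0 ≤ φ i) (hψ1' : ∀ i, ψ i ≤ 1) (hagree : ∀ x y, T x > T y → R x < R y)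
    (hφ1 : ∀ x, T x > k → φ x = 1) (hψ1 : ∀ x, R x < kstar → ψ x = 1)
    (hψ3 : ∀ x, R x > kstar → ψ x = 0) {x : ι} (hx : k < T x) : ψ x = 1 := by
  by_contra hne
  have hle : ∀ y, ψ y ≤ φ y := fun y => by
    rcases le_or_gt (T y) k with hy | hy
    · rw [mdTest_eq_zero_of_lt_of_ne_one hagree hψ1 hψ3 (hy.trans_lt hx) hne]; exact hφ0 y
    · rw [hφ1 y hy]; exact hψ1' y
  exact hne <| (congrFun (eq_of_le_of_tsum_mul_eq_s14 hw hψs hφs hle hsize) x).trans (hφ1 x hx)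

lemma mdTest_eq_zero_of_lt (hw : ∀ i, 0 < w i) (hφs : Summable fun i => φ i * w i)
    (hψs : Summable fun i => ψ i * w i) (hsize : ∑' i, ψ i * w i = ∑' i, φ i * w i)
    (hφ1' : ∀ i, φ i ≤ 1) (hψ0 : ∀ i, 0 ≤ ψ i) (hagree : ∀ x y, T x > T y → R x < R y)
    (hφ3 : ∀ x, T x < k → φ x = 0) (hψ1 : ∀ x, R x < kstar → ψ x = 1)
    (hψ3 : ∀ x, R x > kstar → ψ x = 0) {x : ι} (hx : T x < k) : ψ x = 0 := by
  by_contra hne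
  have hle : ∀ y, φ y ≤ ψ y := fun y => by
    rcases le_or_gt k (T y) with hy | hy
    · rw [mdTest_eq_one_of_lt_of_ne_zero hagree hψ1 hψ3 (hx.trans_le hy) hne]; exact hφ1' y
    · rw [hφ3 y hy]; exact hψ0 y
  exact hne <| (congrFun (eq_of_le_of_tsum_mul_eq_s14 hw hφs hψs hle hsize.symm) x).symm.trans
    (hφ3 x hx)

end Tests

theorem stmt_14_general {𝒳 : Type*} [Countable 𝒳] {Θ : Type*}
    (p : Θ → 𝒳 → ℝ) (hpsum : ∀ θ, ∑' x, p θ x = 1)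
    (θ₀ : Θ) (p₀ : 𝒳 → ℝ) (hnull : p θ₀ = p₀)
    (hp₀pos : ∀ x, 0 < p₀ x)
    (T : 𝒳 → ℝ) (R : 𝒳 → ℕ)
    (hagree : ∀ x y, T x > T y → R x < R y)
    (α : ℝ)
    (φ : 𝒳 → ℝ) (hφ01 : ∀ x, φ x ∈ Set.Icc (0:ℝ) 1)
    (k : ℝ) (γ : ℝ) (hγ : γ ∈ Set.Icc (0:ℝ) 1)
    (hφ1 : ∀ x, T x > k → φ x = 1) (hφ2 : ∀ x, T x = k → φ x = γ)
    (hφ3 : ∀ x, T x < k → φ x = 0) (hφα : ∑' x, φ x * p₀ x = α)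
    (ψ : 𝒳 → ℝ) (hψ01 : ∀ x, ψ x ∈ Set.Icc (0:ℝ) 1)
    (kstar : ℕ)
    (hψ1 : ∀ x, R x < kstar → ψ x = 1)
    (hψ3 : ∀ x, R x > kstar → ψ x = 0) (hψα : ∑' x, ψ x * p₀ x = α) :
    ∀ h : ℝ → ℝ, ConvexOn ℝ (Set.Icc (0:ℝ) 1) h →
      ∑' x, h (φ x) * p₀ x ≤ ∑' x, h (ψ x) * p₀ x := by
  intro h hh
  have hp₀ : Summable p₀ := by
    by_contra hns
    simpa [hnull, tsum_eq_zero_of_not_summable hns] using hpsum θ₀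
  have hφs := hp₀.mul_of_mem_Icc (fun x => (hp₀pos x).le) hφ01
  have hψs := hp₀.mul_of_mem_Icc (fun x => (hp₀pos x).le) hψ01
  have hsize : ∑' x, ψ x * p₀ x = ∑' x, φ x * p₀ x := hψα.trans hφα.symm
  have hψ_gt : ∀ x, k < T x → ψ x = 1 := fun x =>
    mdTest_eq_one_of_gt hp₀pos hφs hψs hsize (fun y => (hφ01 y).1) (fun y => (hψ01 y).2)
      hagree hφ1 hψ1 hψ3
  have hψ_lt : ∀ x, T x < k → ψ x = 0 := fun x =>
    mdTest_eq_zero_of_lt hp₀pos hφs hψs hsize (fun y => (hφ01 y).2) (fun y => (hψ01 y).1)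
      hagree hφ3 hψ1 hψ3
  refine tsum_convex_mul_le_of_eq_or_eq_const hh hp₀ hp₀pos hφ01 hψ01 hγ (fun x => ?_)
    hsize.symm
  rcases lt_trichotomy (T x) k with hx | hx | hx
  · exact .inl ((hφ3 x hx).trans (hψ_lt x hx).symm)
  · exact .inr (hφ2 x hx)
  · exact .inl ((hφ1 x hx).trans (hψ_gt x hx).symm)

/-- If `φ` is a size-α test based on `T`, `ψ` an MD size-α test
based on `R` (injective, agreeing with `T`), `p₀ > 0` everywhere, and `T` is
sufficient for the family, then for every convex `h : [0,1] → ℝ`,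
`Σ_x h(φ(x))p₀(x) ≤ Σ_x h(ψ(x))p₀(x)`: `φ(X)` is dominated by `ψ(X)` in the
convex order under the null. -/
theorem stmt_14 {𝒳 : Type*} [Countable 𝒳] {Θ : Type*}
    (p : Θ → 𝒳 → ℝ) (hp : ∀ θ x, 0 ≤ p θ x) (hpsum : ∀ θ, ∑' x, p θ x = 1)
    (θ₀ : Θ) (p₀ : 𝒳 → ℝ) (hnull : p θ₀ = p₀)
    (hp₀pos : ∀ x, 0 < p₀ x)
    (T : 𝒳 → ℝ) (R : 𝒳 → ℕ) (hRinj : Function.Injective R)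
    (hagree : ∀ x y, T x > T y → R x < R y)
    (hsuff : ∀ (θ : Θ) (x : 𝒳),
      p θ x * (∑' y, if T y = T x then p₀ y else 0)
        = p₀ x * ∑' y, if T y = T x then p θ y else 0)
    (α : ℝ) (hα : α ∈ Set.Icc (0:ℝ) 1)
    (φ : 𝒳 → ℝ) (hφ01 : ∀ x, φ x ∈ Set.Icc (0:ℝ) 1)
    (k : ℝ) (γ : ℝ) (hγ : γ ∈ Set.Icc (0:ℝ) 1)
    (hφ1 : ∀ x, T x > k → φ x = 1) (hφ2 : ∀ x, T x = k → φ x = γ)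
    (hφ3 : ∀ x, T x < k → φ x = 0) (hφα : ∑' x, φ x * p₀ x = α)
    (ψ : 𝒳 → ℝ) (hψ01 : ∀ x, ψ x ∈ Set.Icc (0:ℝ) 1)
    (kstar : ℕ) (γstar : ℝ) (hγstar : γstar ∈ Set.Icc (0:ℝ) 1)
    (hψ1 : ∀ x, R x < kstar → ψ x = 1) (hψ2 : ∀ x, R x = kstar → ψ x = γstar)
    (hψ3 : ∀ x, R x > kstar → ψ x = 0) (hψα : ∑' x, ψ x * p₀ x = α) :
    ∀ h : ℝ → ℝ, ConvexOn ℝ (Set.Icc (0:ℝ) 1) h →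
      ∑' x, h (φ x) * p₀ x ≤ ∑' x, h (ψ x) * p₀ x :=
  stmt_14_general p hpsum θ₀ p₀ hnull hp₀pos T R hagree α φ hφ01 k γ hγ hφ1 hφ2 hφ3 hφα ψ hψ01 kstar
    hψ1 hψ3 hψα
end
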